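/- arXiv:1101.0147 — 3 statements merged into one kernel-verified Lean document; each statement's English description precedes it below -/
import Mathlib

section
/- Let 0 < d ≤ n and let K be a d-set in ℝⁿ with associated mass distribution μ_K (so that c₁ rᵈ ≤ μ_K(B_r(x)) ≤ c₂ rᵈ for all r ∈ (0,1], x ∈ K). Then ∫_{ℝⁿ} f(|x − y|) dμ_K(x) ≈ ∫₀^{diam K} r^{d−1} f(r) dr, with equivalence constants independent of y ∈ K and of the function f, for all y ∈ K and all non-increasing continuous functions f : ℝ⁺ → ℝ⁺. -/
/-!
Cut `(0, D]`, `D = diam K`, into the geometric annuli `(Dρ^(k+1), Dρ^k]`. On each of them the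
antitone `f` lies between its values at the endpoints, so both `∫ f(|x - y|) dμ(x)` and
`∫₀^D r^(d-1) f(r) dr` are comparable to `∑ₖ (Dρ^k)^d f(Dρ^k)` as soon as every annulus has mass
comparable to `(Dρ^k)^d`. For the measure `r^(d-1) dr` this is an exact computation. For `μ`,
with `a r^d ≤ μ(B(y, r)) ≤ b r^d` on `(0, D]`, the upper bound is that of the outer ball, and the
lower bound `a/2 · r^d` follows once `ρ` is so small that `b ρ^d ≤ a/2`.
-/

open MeasureTheory Metric Set

noncomputable section

/-- `K` is a `d`-set in `ℝⁿ` with associated mass distribution `μ`. -/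
def IsDSet {n : ℕ} (d : ℝ) (μ : Measure (EuclideanSpace ℝ (Fin n)))
    (K : Set (EuclideanSpace ℝ (Fin n))) : Prop :=
  IsCompact K ∧ μ Kᶜ = 0 ∧
    (∀ F : Set (EuclideanSpace ℝ (Fin n)), IsClosed F → μ Fᶜ = 0 → K ⊆ F) ∧
    0 < μ Set.univ ∧ μ Set.univ < ⊤ ∧
    ∃ c₁ c₂ : ℝ, 0 < c₁ ∧ 0 < c₂ ∧ ∀ r : ℝ, r ∈ Set.Ioc (0 : ℝ) 1 → ∀ x ∈ K,
      ENNReal.ofReal (c₁ * r ^ d) ≤ μ (Metric.closedBall x r) ∧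
        μ (Metric.closedBall x r) ≤ ENNReal.ofReal (c₂ * r ^ d)

/-- The graph `Γ(f) = {(x, f(x)) : x ∈ K} ⊆ ℝ^{n+1}` of a function `f` on `K ⊆ ℝⁿ`. -/
def graphOn {n : ℕ} (K : Set (EuclideanSpace ℝ (Fin n))) (f : EuclideanSpace ℝ (Fin n) → ℝ) :
    Set (EuclideanSpace ℝ (Fin (n + 1))) :=
  (fun x => (EuclideanSpace.equiv (Fin (n + 1)) ℝ).symm
      (Fin.snoc (EuclideanSpace.equiv (Fin n) ℝ x) (f x))) '' K

open Filter Topology Function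
open scoped ENNReal

theorem ofReal_div_mul_le {x y s : ℝ≥0∞} {α β : ℝ} (hβ : 0 < β)
    (hx : x ≤ ENNReal.ofReal β * s) (hy : ENNReal.ofReal α * s ≤ y) :
    ENNReal.ofReal (α / β) * x ≤ y :=
  calc ENNReal.ofReal (α / β) * x
      ≤ ENNReal.ofReal (α / β) * (ENNReal.ofReal β * s) := by gcongr
    _ = ENNReal.ofReal α * s := by
      rw [← mul_assoc, ← ENNReal.ofReal_mul' hβ.le, div_mul_cancel₀ _ hβ.ne']
    _ ≤ y := hy

theorem le_ofReal_div_mul {x y s : ℝ≥0∞} {α β : ℝ} (hα : 0 < α)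
    (hx : x ≤ ENNReal.ofReal β * s) (hy : ENNReal.ofReal α * s ≤ y) :
    x ≤ ENNReal.ofReal (β / α) * y :=
  calc x ≤ ENNReal.ofReal β * s := hx
    _ = ENNReal.ofReal (β / α) * (ENNReal.ofReal α * s) := by
      rw [← mul_assoc, ← ENNReal.ofReal_mul' hα.le, div_mul_cancel₀ _ hα.ne']
    _ ≤ ENNReal.ofReal (β / α) * y := by gcongr

theorem tendsto_mul_rpow_nhdsGT_zero (c : ℝ) {d : ℝ} (hd : 0 < d) :
    Tendsto (fun r : ℝ => c * r ^ d) (𝓝[>] 0) (𝓝 0) := by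
  simpa using
    ((tendsto_nhdsWithin_of_tendsto_nhds tendsto_id).rpow_const_nhds_zero hd).const_mul c

theorem exists_mul_rpow_le {d c : ℝ} (hd : 0 < d) (hc : 0 < c) (b : ℝ) :
    ∃ ρ ∈ Ioo 0 1, b * ρ ^ d ≤ c :=
  (((tendsto_mul_rpow_nhdsGT_zero b hd).eventually (ge_mem_nhds hc)).and
    (Ioo_mem_nhdsGT zero_lt_one)).exists.imp fun _ h => ⟨h.2, h.1⟩

section GeometricAnnuli

variable {D ρ : ℝ}

theorem iUnion_Ioc_mul_pow (hD : 0 < D) (hρ0 : 0 < ρ) (hρ1 : ρ < 1) :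
    ⋃ k : ℕ, Ioc (D * ρ ^ (k + 1)) (D * ρ ^ k) = Ioc 0 D := by
  ext t
  simp only [mem_iUnion, mem_Ioc]
  constructor
  · rintro ⟨k, hk, hk'⟩
    exact ⟨(mul_pos hD (pow_pos hρ0 _)).trans hk,
      hk'.trans (mul_le_of_le_one_right hD.le (pow_le_one₀ hρ0.le hρ1.le))⟩
  · rintro ⟨ht, htD⟩
    obtain ⟨k, hk, hk'⟩ :=
      exists_nat_pow_near_of_lt_one (div_pos ht hD) ((div_le_one hD).2 htD) hρ0 hρ1
    exact ⟨k, by rwa [lt_div_iff₀' hD] at hk, by rwa [div_le_iff₀' hD] at hk'⟩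

theorem pairwise_disjoint_Ioc_mul_pow (hD : 0 ≤ D) (hρ0 : 0 ≤ ρ) (hρ1 : ρ ≤ 1) :
    Pairwise (Disjoint on fun k : ℕ => Ioc (D * ρ ^ (k + 1)) (D * ρ ^ k)) := by
  have h : Antitone fun k : ℕ => D * ρ ^ k := fun _ _ h =>
    mul_le_mul_of_nonneg_left (pow_le_pow_of_le_one hρ0 hρ1 h) hD
  simpa using h.pairwise_disjoint_on_Ioc_succ

end GeometricAnnuli

section RadialDecomposition

variable {X : Type*} [MeasurableSpace X] {ν : Measure X} {φ : X → ℝ} {D ρ : ℝ}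

theorem setLIntegral_preimage_Ioc_eq_tsum (hφ : Measurable φ) (hD : 0 < D) (hρ0 : 0 < ρ)
    (hρ1 : ρ < 1) (F : X → ℝ≥0∞) :
    ∫⁻ x in φ ⁻¹' Ioc 0 D, F x ∂ν
      = ∑' k : ℕ, ∫⁻ x in φ ⁻¹' Ioc (D * ρ ^ (k + 1)) (D * ρ ^ k), F x ∂ν := by
  rw [← iUnion_Ioc_mul_pow hD hρ0 hρ1, preimage_iUnion, lintegral_iUnion
    (fun _ => hφ measurableSet_Ioc)
    ((pairwise_disjoint_Ioc_mul_pow hD.le hρ0.le hρ1.le).mono fun _ _ h => h.preimage φ)]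

variable {f : ℝ → ℝ} {w : ℕ → ℝ≥0∞}

theorem setLIntegral_ofReal_comp_le_tsum (hφ : Measurable φ) (hD : 0 < D) (hρ0 : 0 < ρ)
    (hρ1 : ρ < 1) (hf : AntitoneOn f (Ioi 0)) {β : ℝ≥0∞}
    (hν : ∀ k, ν (φ ⁻¹' Ioc (D * ρ ^ (k + 1)) (D * ρ ^ k)) ≤ β * w (k + 1)) :
    ∫⁻ x in φ ⁻¹' Ioc 0 D, ENNReal.ofReal (f (φ x)) ∂ν
      ≤ β * ∑' k, w k * ENNReal.ofReal (f (D * ρ ^ k)) := by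
  rw [setLIntegral_preimage_Ioc_eq_tsum hφ hD hρ0 hρ1, ← ENNReal.tsum_mul_left]
  calc _ ≤ ∑' k, β * (w (k + 1) * ENNReal.ofReal (f (D * ρ ^ (k + 1)))) := by
        refine ENNReal.tsum_le_tsum fun k => ?_
        have hR : 0 < D * ρ ^ (k + 1) := mul_pos hD (pow_pos hρ0 _)
        calc _ ≤ ∫⁻ _ in φ ⁻¹' Ioc (D * ρ ^ (k + 1)) (D * ρ ^ k),
              ENNReal.ofReal (f (D * ρ ^ (k + 1))) ∂ν :=
              setLIntegral_mono' (hφ measurableSet_Ioc) fun x hx =>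
                ENNReal.ofReal_le_ofReal (hf hR (hR.trans hx.1) hx.1.le)
          _ ≤ _ := by
            rw [setLIntegral_const, mul_comm, ← mul_assoc]
            exact mul_le_mul_left (hν k) _
    _ ≤ ∑' k, β * (w k * ENNReal.ofReal (f (D * ρ ^ k))) :=
      ENNReal.tsum_comp_le_tsum_of_injective (add_left_injective 1) _

theorem tsum_le_setLIntegral_ofReal_comp (hφ : Measurable φ) (hD : 0 < D) (hρ0 : 0 < ρ)
    (hρ1 : ρ < 1) (hf : AntitoneOn f (Ioi 0)) {α : ℝ≥0∞}
    (hν : ∀ k, α * w k ≤ ν (φ ⁻¹' Ioc (D * ρ ^ (k + 1)) (D * ρ ^ k))) :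
    α * ∑' k, w k * ENNReal.ofReal (f (D * ρ ^ k))
      ≤ ∫⁻ x in φ ⁻¹' Ioc 0 D, ENNReal.ofReal (f (φ x)) ∂ν := by
  rw [setLIntegral_preimage_Ioc_eq_tsum hφ hD hρ0 hρ1, ← ENNReal.tsum_mul_left]
  refine ENNReal.tsum_le_tsum fun k => ?_
  have hR : 0 < D * ρ ^ (k + 1) := mul_pos hD (pow_pos hρ0 _)
  calc α * (w k * ENNReal.ofReal (f (D * ρ ^ k)))
      ≤ ∫⁻ _ in φ ⁻¹' Ioc (D * ρ ^ (k + 1)) (D * ρ ^ k),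
          ENNReal.ofReal (f (D * ρ ^ k)) ∂ν := by
        rw [setLIntegral_const, mul_comm (ENNReal.ofReal _), ← mul_assoc]
        exact mul_le_mul_left (hν k) _
    _ ≤ _ := setLIntegral_mono' (hφ measurableSet_Ioc) fun x hx =>
        ENNReal.ofReal_le_ofReal (hf (hR.trans hx.1) (hR.trans (hx.1.trans_le hx.2)) hx.2)

end RadialDecomposition

def annulusSum (d D ρ : ℝ) (f : ℝ → ℝ) : ℝ≥0∞ :=
  ∑' k : ℕ, ENNReal.ofReal ((D * ρ ^ k) ^ d) * ENNReal.ofReal (f (D * ρ ^ k))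

theorem mul_pow_mem_Ioc {D ρ : ℝ} (hD : 0 < D) (hρ0 : 0 < ρ) (hρ1 : ρ < 1) (k : ℕ) :
    D * ρ ^ k ∈ Ioc 0 D :=
  ⟨mul_pos hD (pow_pos hρ0 k), mul_le_of_le_one_right hD.le (pow_le_one₀ hρ0.le hρ1.le)⟩

section MetricMeasure

variable {X : Type*} [PseudoMetricSpace X]

theorem preimage_dist_Ioc (y : X) (s t : ℝ) :
    (dist · y) ⁻¹' Ioc s t = closedBall y t \ closedBall y s := by
  ext x
  simp [and_comm]

variable [MeasurableSpace X] {μ : Measure X} {y : X} {a b d r ρ : ℝ}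

theorem measure_preimage_dist_Ioc_mul_le (hr : 0 ≤ r) (hρ : 0 < ρ)
    (hup : μ (closedBall y r) ≤ ENNReal.ofReal (b * r ^ d)) :
    μ ((dist · y) ⁻¹' Ioc (r * ρ) r)
      ≤ ENNReal.ofReal (b / ρ ^ d) * ENNReal.ofReal ((r * ρ) ^ d) := by
  refine (measure_mono fun x hx => hx.2).trans (hup.trans_eq ?_)
  rw [← ENNReal.ofReal_mul' (by positivity), Real.mul_rpow hr hρ.le]
  congr 1
  field_simp

theorem le_measure_preimage_dist_Ioc_mul (hr : 0 ≤ r) (hρ : 0 ≤ ρ) (hb : 0 ≤ b)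
    (hlow : ENNReal.ofReal (a * r ^ d) ≤ μ (closedBall y r))
    (hup : μ (closedBall y (r * ρ)) ≤ ENNReal.ofReal (b * (r * ρ) ^ d))
    (hρb : b * ρ ^ d ≤ a / 2) :
    ENNReal.ofReal (a / 2) * ENNReal.ofReal (r ^ d) ≤ μ ((dist · y) ⁻¹' Ioc (r * ρ) r) := by
  have hrd : 0 ≤ r ^ d := Real.rpow_nonneg hr d
  rw [preimage_dist_Ioc, ← ENNReal.ofReal_mul' hrd]
  calc ENNReal.ofReal (a / 2 * r ^ d) ≤ ENNReal.ofReal (a * r ^ d - b * (r * ρ) ^ d) := by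
        rw [Real.mul_rpow hr hρ]
        gcongr
        nlinarith
    _ = ENNReal.ofReal (a * r ^ d) - ENNReal.ofReal (b * (r * ρ) ^ d) :=
        ENNReal.ofReal_sub _ (by positivity)
    _ ≤ μ (closedBall y r) - μ (closedBall y (r * ρ)) := tsub_le_tsub hlow hup
    _ ≤ μ (closedBall y r \ closedBall y (r * ρ)) := le_measure_sdiff

variable [OpensMeasurableSpace X] {D : ℝ} {f : ℝ → ℝ}

theorem annulusSum_le_lintegral_dist (hD : 0 < D) (hρ0 : 0 < ρ) (hρ1 : ρ < 1) (hb : 0 ≤ b)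
    (hρb : b * ρ ^ d ≤ a / 2)
    (hlow : ∀ r ∈ Ioc 0 D, ENNReal.ofReal (a * r ^ d) ≤ μ (closedBall y r))
    (hup : ∀ r ∈ Ioc 0 D, μ (closedBall y r) ≤ ENNReal.ofReal (b * r ^ d))
    (hf : AntitoneOn f (Ioi 0)) :
    ENNReal.ofReal (a / 2) * annulusSum d D ρ f ≤ ∫⁻ x, ENNReal.ofReal (f (dist x y)) ∂μ := by
  refine (tsum_le_setLIntegral_ofReal_comp (by fun_prop : Measurable (dist · y))
    hD hρ0 hρ1 hf fun k => ?_).trans (setLIntegral_le_lintegral _ _)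
  have hR := mul_pow_mem_Ioc hD hρ0 hρ1 k
  have hR' := mul_pow_mem_Ioc hD hρ0 hρ1 (k + 1)
  rw [pow_succ, ← mul_assoc] at hR' ⊢
  exact le_measure_preimage_dist_Ioc_mul hR.1.le hρ0.le hb (hlow _ hR) (hup _ hR') hρb

theorem lintegral_dist_le_annulusSum (hD : 0 < D) (hρ0 : 0 < ρ) (hρ1 : ρ < 1)
    (hup : ∀ r ∈ Ioc 0 D, μ (closedBall y r) ≤ ENNReal.ofReal (b * r ^ d))
    (hae : ∀ᵐ x ∂μ, dist x y ∈ Ioc 0 D) (hf : AntitoneOn f (Ioi 0)) :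
    ∫⁻ x, ENNReal.ofReal (f (dist x y)) ∂μ
      ≤ ENNReal.ofReal (b / ρ ^ d) * annulusSum d D ρ f := by
  rw [← Measure.restrict_eq_self_of_ae_mem hae]
  refine setLIntegral_ofReal_comp_le_tsum (by fun_prop : Measurable (dist · y))
    hD hρ0 hρ1 hf fun k => ?_
  have hR := mul_pow_mem_Ioc hD hρ0 hρ1 k
  rw [pow_succ, ← mul_assoc]
  exact measure_preimage_dist_Ioc_mul_le hR.1.le hρ0 (hup _ hR)

end MetricMeasure

section Radial

variable {d A B r ρ D : ℝ} {f : ℝ → ℝ}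

theorem withDensity_rpow_Ioc (hd : 0 < d) (hA : 0 ≤ A) (hAB : A ≤ B) :
    volume.withDensity (fun t => ENNReal.ofReal (t ^ (d - 1))) (Ioc A B)
      = ENNReal.ofReal ((B ^ d - A ^ d) / d) := by
  rw [withDensity_apply _ measurableSet_Ioc, ← ofReal_integral_eq_lintegral_ofReal
    (intervalIntegral.intervalIntegrable_rpow' (by linarith : -1 < d - 1)).1
    ((ae_restrict_iff' measurableSet_Ioc).2 (ae_of_all _ fun t ht =>
      Real.rpow_nonneg (hA.trans ht.1.le) _)),
    ← intervalIntegral.integral_of_le hAB, integral_rpow (Or.inl (by linarith))]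
  norm_num

theorem withDensity_rpow_Ioc_mul (hd : 0 < d) (hr : 0 ≤ r) (hρ0 : 0 ≤ ρ) (hρ1 : ρ ≤ 1) :
    volume.withDensity (fun t => ENNReal.ofReal (t ^ (d - 1))) (Ioc (r * ρ) r)
      = ENNReal.ofReal ((1 - ρ ^ d) / d) * ENNReal.ofReal (r ^ d) := by
  rw [withDensity_rpow_Ioc hd (by positivity) (mul_le_of_le_one_right hr hρ1),
    ← ENNReal.ofReal_mul' (by positivity), Real.mul_rpow hr hρ0]
  ring_nf

theorem setLIntegral_Ioo_rpow_mul_eq (D : ℝ) (f : ℝ → ℝ) :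
    ∫⁻ t in Ioo 0 D, ENNReal.ofReal (t ^ (d - 1) * f t)
      = ∫⁻ t in id ⁻¹' Ioc 0 D, ENNReal.ofReal (f t)
          ∂volume.withDensity fun t => ENNReal.ofReal (t ^ (d - 1)) := by
  rw [setLIntegral_congr Ioo_ae_eq_Ioc, preimage_id,
    setLIntegral_withDensity_eq_setLIntegral_mul_non_measurable _ (by fun_prop) _
      measurableSet_Ioc (ae_of_all _ fun _ => ENNReal.ofReal_lt_top)]
  exact setLIntegral_congr_fun measurableSet_Ioc fun t ht =>
    ENNReal.ofReal_mul (Real.rpow_nonneg ht.1.le _)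

theorem annulusSum_le_setLIntegral_rpow_mul (hd : 0 < d) (hD : 0 < D) (hρ0 : 0 < ρ)
    (hρ1 : ρ < 1) (hf : AntitoneOn f (Ioi 0)) :
    ENNReal.ofReal ((1 - ρ ^ d) / d) * annulusSum d D ρ f
      ≤ ∫⁻ t in Ioo 0 D, ENNReal.ofReal (t ^ (d - 1) * f t) := by
  rw [setLIntegral_Ioo_rpow_mul_eq]
  refine tsum_le_setLIntegral_ofReal_comp measurable_id hD hρ0 hρ1 hf fun k => ?_
  rw [pow_succ, ← mul_assoc, preimage_id,
    withDensity_rpow_Ioc_mul hd (mul_pow_mem_Ioc hD hρ0 hρ1 k).1.le hρ0.le hρ1.le]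

theorem setLIntegral_rpow_mul_le_annulusSum (hd : 0 < d) (hD : 0 < D) (hρ0 : 0 < ρ)
    (hρ1 : ρ < 1) (hf : AntitoneOn f (Ioi 0)) :
    ∫⁻ t in Ioo 0 D, ENNReal.ofReal (t ^ (d - 1) * f t)
      ≤ ENNReal.ofReal ((1 - ρ ^ d) / (d * ρ ^ d)) * annulusSum d D ρ f := by
  rw [setLIntegral_Ioo_rpow_mul_eq]
  refine setLIntegral_ofReal_comp_le_tsum measurable_id hD hρ0 hρ1 hf fun k => le_of_eq ?_
  have hR := (mul_pow_mem_Ioc hD hρ0 hρ1 k).1.le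
  rw [pow_succ, ← mul_assoc, preimage_id, withDensity_rpow_Ioc_mul hd hR hρ0.le hρ1.le,
    ← ENNReal.ofReal_mul' (by positivity), ← ENNReal.ofReal_mul' (by positivity),
    Real.mul_rpow hR hρ0.le]
  congr 1
  field_simp

end Radial

namespace IsDSet

variable {n : ℕ} {d : ℝ} {μ : Measure (EuclideanSpace ℝ (Fin n))}
  {K : Set (EuclideanSpace ℝ (Fin n))}

theorem measure_singleton (hK : IsDSet d μ K) (hd : 0 < d) {y : EuclideanSpace ℝ (Fin n)}
    (hy : y ∈ K) : μ {y} = 0 := by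
  obtain ⟨-, -, -, -, -, c₁, c₂, -, -, hball⟩ := hK
  refine nonpos_iff_eq_zero.1 (ge_of_tendsto
    (by simpa using ENNReal.tendsto_ofReal (tendsto_mul_rpow_nhdsGT_zero c₂ hd)) ?_)
  filter_upwards [Ioc_mem_nhdsGT zero_lt_one] with r hr
  exact (measure_mono (singleton_subset_iff.2 (mem_closedBall_self hr.1.le))).trans
    (hball r hr y hy).2

theorem nontrivial (hK : IsDSet d μ K) (hd : 0 < d) : K.Nontrivial := by
  by_contra h
  have hμK : μ K = 0 := by
    obtain hK0 | ⟨y, rfl⟩ := (not_nontrivial_iff.1 h).eq_empty_or_singleton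
    · rw [hK0, measure_empty]
    · exact hK.measure_singleton hd (mem_singleton y)
  exact hK.2.2.2.1.ne' (by rw [← measure_of_measure_compl_eq_zero hK.2.1, hμK])

theorem diam_pos (hK : IsDSet d μ K) (hd : 0 < d) : 0 < diam K :=
  Metric.diam_pos (hK.nontrivial hd) hK.1.isBounded

theorem ae_dist_mem_Ioc (hK : IsDSet d μ K) (hd : 0 < d) {y : EuclideanSpace ℝ (Fin n)}
    (hy : y ∈ K) : ∀ᵐ x ∂μ, dist x y ∈ Ioc 0 (diam K) := by
  filter_upwards [ae_iff.2 hK.2.1, measure_eq_zero_iff_ae_notMem.1 (hK.measure_singleton hd hy)]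
    with x hx hxy
  exact ⟨dist_pos.2 hxy, dist_le_diam_of_mem hK.1.isBounded hx hy⟩

theorem exists_measure_closedBall_le (hK : IsDSet d μ K) (hd : 0 ≤ d) :
    ∃ b > 0, ∀ y ∈ K, ∀ r > 0, μ (closedBall y r) ≤ ENNReal.ofReal (b * r ^ d) := by
  obtain ⟨-, -, -, -, hμtop, c₁, c₂, -, hc₂, hball⟩ := hK
  refine ⟨max c₂ (μ univ).toReal, lt_max_of_lt_left hc₂, fun y hy r hr => ?_⟩
  rcases le_or_gt r 1 with h1 | h1
  · refine (hball r ⟨hr, h1⟩ y hy).2.trans (ENNReal.ofReal_le_ofReal ?_)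
    gcongr
    exact le_max_left _ _
  · calc μ (closedBall y r) ≤ μ univ := measure_mono (subset_univ _)
      _ = ENNReal.ofReal (μ univ).toReal := (ENNReal.ofReal_toReal hμtop.ne).symm
      _ ≤ _ := ENNReal.ofReal_le_ofReal ((le_max_right _ _).trans
          (le_mul_of_one_le_right (le_max_of_le_left hc₂.le) (Real.one_le_rpow h1.le hd)))

theorem exists_le_measure_closedBall (hK : IsDSet d μ K) (hd : 0 ≤ d) (R : ℝ) :
    ∃ a > 0, ∀ y ∈ K, ∀ r ∈ Ioc 0 R, ENNReal.ofReal (a * r ^ d) ≤ μ (closedBall y r) := by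
  obtain ⟨-, -, -, -, -, c₁, c₂, hc₁, -, hball⟩ := hK
  have hR : 1 ≤ max 1 R ^ d := Real.one_le_rpow (le_max_left _ _) hd
  refine ⟨c₁ / max 1 R ^ d, by positivity, fun y hy r hr => ?_⟩
  rcases le_or_gt r 1 with h1 | h1
  · refine (ENNReal.ofReal_le_ofReal ?_).trans (hball r ⟨hr.1, h1⟩ y hy).1
    exact mul_le_mul_of_nonneg_right (div_le_self hc₁.le hR) (Real.rpow_nonneg hr.1.le _)
  · calc ENNReal.ofReal (c₁ / max 1 R ^ d * r ^ d) ≤ ENNReal.ofReal (c₁ * 1 ^ d) := by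
          refine ENNReal.ofReal_le_ofReal ?_
          rw [Real.one_rpow, mul_one, div_mul_eq_mul_div, div_le_iff₀ (by positivity)]
          exact mul_le_mul_of_nonneg_left
            (Real.rpow_le_rpow hr.1.le (hr.2.trans (le_max_right _ _)) hd) hc₁.le
      _ ≤ μ (closedBall y 1) := (hball 1 ⟨one_pos, le_rfl⟩ y hy).1
      _ ≤ μ (closedBall y r) := measure_mono (closedBall_subset_closedBall h1.le)

end IsDSet

theorem lintegral_dist_dSet_equiv_general {n : ℕ} (d : ℝ) (hd0 : 0 < d)
    (μ : Measure (EuclideanSpace ℝ (Fin n))) (K : Set (EuclideanSpace ℝ (Fin n)))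
    (hK : IsDSet d μ K) :
    ∃ C₁ C₂ : ℝ, 0 < C₁ ∧ 0 < C₂ ∧ ∀ y ∈ K, ∀ f : ℝ → ℝ,
      (∀ r ∈ Set.Ioi (0 : ℝ), 0 < f r) → AntitoneOn f (Set.Ioi 0) →
      ContinuousOn f (Set.Ioi 0) →
      ENNReal.ofReal C₁ * ∫⁻ r in Set.Ioo 0 (Metric.diam K), ENNReal.ofReal (r ^ (d - 1) * f r)
          ≤ ∫⁻ x, ENNReal.ofReal (f (dist x y)) ∂μ ∧
        ∫⁻ x, ENNReal.ofReal (f (dist x y)) ∂μ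
          ≤ ENNReal.ofReal C₂ *
            ∫⁻ r in Set.Ioo 0 (Metric.diam K), ENNReal.ofReal (r ^ (d - 1) * f r) := by
  obtain ⟨a, ha, hlow⟩ := hK.exists_le_measure_closedBall hd0.le (diam K)
  obtain ⟨b, hb, hup⟩ := hK.exists_measure_closedBall_le hd0.le
  obtain ⟨ρ, ⟨hρ0, hρ1⟩, hρb⟩ := exists_mul_rpow_le hd0 (half_pos ha) b
  have hD := hK.diam_pos hd0
  have hρd : 0 < 1 - ρ ^ d := sub_pos.2 (Real.rpow_lt_one hρ0.le hρ1 hd0)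
  refine ⟨a / 2 / ((1 - ρ ^ d) / (d * ρ ^ d)), b / ρ ^ d / ((1 - ρ ^ d) / d),
    by positivity, by positivity, fun y hy f _ hf _ => ⟨?_, ?_⟩⟩
  · exact ofReal_div_mul_le (by positivity)
      (setLIntegral_rpow_mul_le_annulusSum hd0 hD hρ0 hρ1 hf)
      (annulusSum_le_lintegral_dist hD hρ0 hρ1 hb.le hρb (hlow y hy)
        (fun r hr => hup y hy r hr.1) hf)
  · exact le_ofReal_div_mul (by positivity)
      (lintegral_dist_le_annulusSum hD hρ0 hρ1 (fun r hr => hup y hy r hr.1)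
        (hK.ae_dist_mem_Ioc hd0 hy) hf)
      (annulusSum_le_setLIntegral_rpow_mul hd0 hD hρ0 hρ1 hf)

/-- For a `d`-set `K` in `ℝⁿ` with mass distribution `μ`,
`∫_{ℝⁿ} f(|x-y|) dμ(x) ≈ ∫₀^{diam K} r^{d-1} f(r) dr`, with equivalence constants independent
of `y ∈ K` and of the non-increasing continuous function `f : ℝ⁺ → ℝ⁺`. -/
theorem lintegral_dist_dSet_equiv {n : ℕ} (d : ℝ) (hd0 : 0 < d) (hdn : d ≤ n)
    (μ : Measure (EuclideanSpace ℝ (Fin n))) (K : Set (EuclideanSpace ℝ (Fin n)))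
    (hK : IsDSet d μ K) :
    ∃ C₁ C₂ : ℝ, 0 < C₁ ∧ 0 < C₂ ∧ ∀ y ∈ K, ∀ f : ℝ → ℝ,
      (∀ r ∈ Set.Ioi (0 : ℝ), 0 < f r) → AntitoneOn f (Set.Ioi 0) →
      ContinuousOn f (Set.Ioi 0) →
      ENNReal.ofReal C₁ * ∫⁻ r in Set.Ioo 0 (Metric.diam K), ENNReal.ofReal (r ^ (d - 1) * f r)
          ≤ ∫⁻ x, ENNReal.ofReal (f (dist x y)) ∂μ ∧
        ∫⁻ x, ENNReal.ofReal (f (dist x y)) ∂μ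
          ≤ ENNReal.ofReal C₂ *
            ∫⁻ r in Set.Ioo 0 (Metric.diam K), ENNReal.ofReal (r ^ (d - 1) * f r) :=
  lintegral_dist_dSet_equiv_general d hd0 μ K hK

end
end

section
/- Let 0 < s ≤ 1 and let K be a d-set in ℝⁿ with 0 < d ≤ n. If f : K → ℝ is Hölder continuous of exponent s, i.e. there is c > 0 with |f(x) − f(y)| ≤ c|x − y|^s for all x, y ∈ K, then the Hausdorff dimension of the graph Γ(f) = {(x, f(x)) : x ∈ K} ⊆ ℝ^{n+1} satisfies dim_H Γ(f) ≤ min{d + 1 − s, d/s}. -/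
/-!
A `d`-set needs at most `B r⁻ᵈ` closed `r`-balls centred in `K` to be covered: the `r/2`-balls
around a maximal `r`-separated subset are disjoint and each has mass at least `c₁ (r/2)ᵈ`.
Over each such ball the `s`-Hölder function `f` oscillates by at most `2c rˢ`, so cutting the
range into `≲ r^{s-1}` slices of height `r` covers the graph by `≲ r^{s-1-d}` balls of radius
`r`; hence `μH[d+1-s]` of the graph is finite. For the bound `d/s`, `x ↦ (x, f x)` is
`s`-Hölder on the bounded set `K`, and `dim_H K ≤ d` by the same covering count.
Both bounds are proved for the graph in `ℝⁿ × ℝ` (sup metric), which maps onto `Γ(f) ⊆ ℝⁿ⁺¹`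
by a Lipschitz map.
-/

open MeasureTheory Metric Set

noncomputable section

open Filter Topology
open scoped ENNReal NNReal

theorem HolderOnWith.of_dist_le {X Y : Type*} [PseudoMetricSpace X] [PseudoMetricSpace Y]
    {C r : ℝ≥0} {f : X → Y} {s : Set X}
    (h : ∀ x ∈ s, ∀ y ∈ s, dist (f x) (f y) ≤ C * dist x y ^ (r : ℝ)) :
    HolderOnWith C r f s := fun x hx y hy => by
  rw [edist_nndist, edist_nndist, ← ENNReal.coe_rpow_of_nonneg _ r.coe_nonneg, ← ENNReal.coe_mul,
    ENNReal.coe_le_coe, ← NNReal.coe_le_coe]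
  push_cast
  exact h x hx y hy

theorem HolderOnWith.prodMk {X Y Z : Type*} [PseudoEMetricSpace X] [PseudoEMetricSpace Y]
    [PseudoEMetricSpace Z] {C₁ C₂ r : ℝ≥0} {f : X → Y} {g : X → Z} {s : Set X}
    (hf : HolderOnWith C₁ r f s) (hg : HolderOnWith C₂ r g s) :
    HolderOnWith (max C₁ C₂) r (fun x => (f x, g x)) s := fun x hx y hy => by
  rw [Prod.edist_eq]
  exact max_le ((hf x hx y hy).trans (by gcongr; exact le_max_left _ _))
    ((hg x hx y hy).trans (by gcongr; exact le_max_right _ _))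

theorem HolderOnWith.dimH_graphOn_le_div {X : Type*} [MetricSpace X] {K : Set X}
    (hK : Bornology.IsBounded K) {f : X → ℝ} {C s : ℝ≥0} (hs0 : 0 < s) (hs1 : s ≤ 1)
    (hf : HolderOnWith C s f K) :
    dimH (K.graphOn f) ≤ dimH K / s := by
  have hD : ∀ x ∈ K, ∀ y ∈ K, edist x y ≤ (ediam K).toNNReal := fun x hx y hy =>
    (edist_le_ediam_of_mem hx hy).trans (ENNReal.coe_toNNReal hK.ediam_ne_top).ge
  exact (((holderWith_id.holderOnWith K).of_le hD hs1).prodMk hf).dimH_image_le hs0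

theorem Metric.exists_finset_isCover_card_eq_externalCoveringNumber {X : Type*}
    [PseudoEMetricSpace X] {ε : ℝ≥0} {A : Set X} (h : externalCoveringNumber ε A ≠ ⊤) :
    ∃ N : Finset X, IsCover ε A N ∧ (N.card : ℕ∞) = externalCoveringNumber ε A := by
  have : Nonempty {N : Set X // IsCover ε A N} := ⟨⟨A, .rfl⟩⟩
  obtain ⟨⟨N, hN⟩, hNeq⟩ :=
    ENat.exists_eq_iInf fun N : {N : Set X // IsCover ε A N} => N.1.encard
  have hNeq : N.encard = externalCoveringNumber ε A := by
    rw [hNeq, externalCoveringNumber, iInf_subtype']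
  have hN_fin : N.Finite := Set.encard_ne_top_iff.mp (hNeq ▸ h)
  exact ⟨hN_fin.toFinset, by simpa using hN, by rw [← hNeq, hN_fin.encard_eq_coe_toFinset_card]⟩

theorem dimH_le_of_externalCoveringNumber_mul_rpow_le {X : Type*} [EMetricSpace X] {E : Set X}
    {a : ℝ} (ha : 0 ≤ a) {C : ℝ≥0∞} (hC : C ≠ ⊤)
    (h : ∀ᶠ r in 𝓝[>] (0 : ℝ≥0), (externalCoveringNumber r E : ℝ≥0∞) * (r : ℝ≥0∞) ^ a ≤ C) :
    dimH E ≤ ENNReal.ofReal a := by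
  borelize X
  have hfinite : ∀ᶠ r in 𝓝[>] (0 : ℝ≥0), externalCoveringNumber r E ≠ ⊤ := by
    filter_upwards [h, self_mem_nhdsWithin] with r hr (hr0 : 0 < r) htop
    rw [htop, ENat.toENNReal_top, ENNReal.top_mul (by simp [hr0.ne'])] at hr
    exact hC (top_le_iff.mp hr)
  choose! N hNcover hNcard using fun r (hr : externalCoveringNumber r E ≠ ⊤) =>
    exists_finset_isCover_card_eq_externalCoveringNumber hr
  have hcover : μH[a] E ≤
      liminf (fun r : ℝ≥0 => ∑ x : N r, ediam (closedEBall (x : X) r) ^ a) (𝓝[>] 0) :=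
    Measure.hausdorffMeasure_le_liminf_sum (ι := fun r : ℝ≥0 => N r) a E
      (fun r : ℝ≥0 => 2 * (r : ℝ≥0∞))
      (((ENNReal.continuous_const_mul ENNReal.ofNat_ne_top).comp ENNReal.continuous_coe).tendsto'
        0 0 (by simp) |>.mono_left nhdsWithin_le_nhds)
      (fun r x => closedEBall (x : X) r) (.of_forall fun r x => ediam_closedEBall_le)
      (hfinite.mono fun r hr => by
        simpa [isCover_iff_subset_iUnion_closedEBall, iUnion_subtype] using hNcover r hr)
  have hμH : μH[a] E ≤ 2 ^ a * C := by
    refine hcover.trans (liminf_le_of_frequently_le' (Eventually.frequently ?_))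
    filter_upwards [h, hfinite] with r hr hr'
    calc ∑ x : N r, ediam (closedEBall (x : X) r) ^ a ≤ ∑ x : N r, (2 * (r : ℝ≥0∞)) ^ a := by
          gcongr; exact ediam_closedEBall_le
      _ = 2 ^ a * ((externalCoveringNumber r E : ℝ≥0∞) * (r : ℝ≥0∞) ^ a) := by
          rw [Finset.sum_const, nsmul_eq_mul, ENNReal.mul_rpow_of_nonneg _ _ ha, ← hNcard r hr']
          simp only [Finset.card_univ, Fintype.card_coe, ENat.toENNReal_coe]
          ring
      _ ≤ 2 ^ a * C := by gcongr
  have hne : μH[(a.toNNReal : ℝ)] E ≠ ⊤ := by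
    rw [Real.coe_toNNReal a ha]
    exact (hμH.trans_lt (by finiteness)).ne
  exact dimH_le_of_hausdorffMeasure_ne_top hne

theorem dimH_le_of_coveringNumber_mul_rpow_le {X : Type*} [EMetricSpace X] {E : Set X} {a : ℝ}
    (ha : 0 ≤ a) {B : ℝ≥0∞} (hB : B ≠ ⊤)
    (hE : ∀ r ∈ Ioc (0 : ℝ≥0) 1, (coveringNumber r E : ℝ≥0∞) * (r : ℝ≥0∞) ^ a ≤ B) :
    dimH E ≤ ENNReal.ofReal a :=
  dimH_le_of_externalCoveringNumber_mul_rpow_le ha hB <|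
    eventually_of_mem (Ioc_mem_nhdsGT one_pos) fun r hr => le_trans
      (by gcongr; exact_mod_cast externalCoveringNumber_le_coveringNumber r E) (hE r hr)

theorem exists_le_floor_div_abs_sub_le {a u L r : ℝ} (hr : 0 < r) (hau : a ≤ u)
    (hu : u ≤ a + L) : ∃ j ≤ ⌊L / r⌋₊, |u - (a + j * r)| ≤ r := by
  have hq : 0 ≤ (u - a) / r := div_nonneg (by linarith) hr.le
  refine ⟨⌊(u - a) / r⌋₊, Nat.floor_mono (by gcongr; linarith), abs_le.mpr ⟨?_, ?_⟩⟩
  · have := Nat.floor_le hq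
    rw [le_div_iff₀ hr] at this
    linarith
  · have := Nat.lt_floor_add_one ((u - a) / r)
    rw [div_lt_iff₀ hr] at this
    linarith

section Graph

variable {X : Type*} [PseudoMetricSpace X] {K N : Set X} {f : X → ℝ} {C s r : ℝ≥0}

/-- On `K ∩ closedBall x r` the values of `f` lie in `[f x - C rˢ, f x + C rˢ]`, whose points
are within `r` of some `f x - C rˢ + j r` with `j ≤ ⌊2 C rˢ / r⌋₊`. -/
theorem HolderOnWith.isCover_graphOn (hf : HolderOnWith C s f K) (hr : 0 < r) (hNK : N ⊆ K)
    (hN : IsCover r K N) :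
    IsCover r (K.graphOn f)
      ((fun p : X × ℕ => (p.1, f p.1 - C * (r : ℝ) ^ (s : ℝ) + p.2 * r)) ''
        (N ×ˢ Iic ⌊2 * (C * (r : ℝ) ^ (s : ℝ)) / r⌋₊)) := by
  rintro _ ⟨y, hy, rfl⟩
  obtain ⟨x, hxN, hyx⟩ := hN hy
  have hyx' : dist y x ≤ r := by rw [dist_nndist]; exact_mod_cast edist_le_coe.mp hyx
  have hfyx : |f y - f x| ≤ C * (r : ℝ) ^ (s : ℝ) := hf.dist_le_of_le hy (hNK hxN) hyx'
  obtain ⟨j, hjM, hj⟩ := exists_le_floor_div_abs_sub_le (u := f y)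
    (a := f x - C * (r : ℝ) ^ (s : ℝ)) (L := 2 * (C * (r : ℝ) ^ (s : ℝ))) (NNReal.coe_pos.mpr hr)
    (by linarith [(abs_le.mp hfyx).1]) (by linarith [(abs_le.mp hfyx).2])
  refine ⟨_, mem_image_of_mem _ (mk_mem_prod hxN hjM), ?_⟩
  change edist (y, f y) (x, f x - C * (r : ℝ) ^ (s : ℝ) + j * r) ≤ r
  rw [Prod.edist_eq]
  refine max_le hyx ?_
  rw [edist_dist, Real.dist_eq, ← ENNReal.ofReal_coe_nnreal]
  exact ENNReal.ofReal_le_ofReal hj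

theorem HolderOnWith.externalCoveringNumber_graphOn_le (hf : HolderOnWith C s f K) (hr : 0 < r) :
    externalCoveringNumber r (K.graphOn f) ≤
      coveringNumber r K * (⌊2 * (C * (r : ℝ) ^ (s : ℝ)) / r⌋₊ + 1) := by
  by_cases htop : coveringNumber r K = ⊤
  · rw [htop, ENat.top_mul (by simp)]
    exact le_top
  obtain ⟨N, hNK, -, hN, hNcard⟩ := exists_set_encard_eq_coveringNumber htop
  refine ((hf.isCover_graphOn hr hNK hN).externalCoveringNumber_le_encard.trans
    (encard_image_le _ _)).trans_eq ?_
  rw [encard_prod, hNcard, ← Finset.coe_Iic, encard_coe_eq_coe_finsetCard, Nat.card_Iic]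
  rfl

end Graph

theorem HolderOnWith.dimH_graphOn_le_add_one_sub {X : Type*} [MetricSpace X] {K : Set X}
    {f : X → ℝ} {C s : ℝ≥0} {d : ℝ} {B : ℝ≥0∞} (hd : 0 ≤ d) (hs1 : s ≤ 1) (hB : B ≠ ⊤)
    (hK : ∀ r ∈ Ioc (0 : ℝ≥0) 1, (coveringNumber r K : ℝ≥0∞) * (r : ℝ≥0∞) ^ d ≤ B)
    (hf : HolderOnWith C s f K) :
    dimH (K.graphOn f) ≤ ENNReal.ofReal (d + 1 - s) := by
  have hs1' : (s : ℝ) ≤ 1 := mod_cast hs1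
  refine dimH_le_of_externalCoveringNumber_mul_rpow_le (by linarith) (C := B * (2 * C + 1))
    (by finiteness) (eventually_of_mem (Ioc_mem_nhdsGT one_pos) ?_)
  rintro r ⟨hr0, hr1⟩
  set M := ⌊2 * (C * (r : ℝ) ^ (s : ℝ)) / r⌋₊
  have hr0' : (0 : ℝ) < r := hr0
  have hslices : (M + 1 : ℝ≥0∞) * (r : ℝ≥0∞) ^ (1 - (s : ℝ)) ≤ 2 * C + 1 := by
    have hM : (M : ℝ) ≤ 2 * C * (r : ℝ) ^ ((s : ℝ) - 1) := by
      rw [Real.rpow_sub_one hr0'.ne', ← mul_div_assoc, mul_assoc]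
      exact Nat.floor_le (by positivity)
    have h1 : (r : ℝ) ^ (1 - (s : ℝ)) ≤ 1 := Real.rpow_le_one r.2 (mod_cast hr1) (by linarith)
    have h2 : (r : ℝ) ^ ((s : ℝ) - 1) * (r : ℝ) ^ (1 - (s : ℝ)) = 1 := by
      rw [← Real.rpow_add hr0']; simp
    have h3 : (M : ℝ) * (r : ℝ) ^ (1 - (s : ℝ)) ≤ 2 * C :=
      calc (M : ℝ) * (r : ℝ) ^ (1 - (s : ℝ))
          ≤ 2 * C * (r : ℝ) ^ ((s : ℝ) - 1) * (r : ℝ) ^ (1 - (s : ℝ)) := by gcongr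
        _ = 2 * C := by rw [mul_assoc, h2, mul_one]
    rw [← ENNReal.coe_rpow_of_ne_zero (by simpa using hr0.ne')]
    exact_mod_cast (show ((M + 1) * r ^ (1 - (s : ℝ)) : ℝ≥0) ≤ 2 * C + 1 by
      rw [← NNReal.coe_le_coe]; push_cast; linarith)
  have hgraph := ENat.toENNReal_le.mpr (hf.externalCoveringNumber_graphOn_le hr0)
  push_cast at hgraph
  calc (externalCoveringNumber r (K.graphOn f) : ℝ≥0∞) * (r : ℝ≥0∞) ^ (d + 1 - s)
      ≤ (coveringNumber r K : ℝ≥0∞) * (M + 1) * (r : ℝ≥0∞) ^ (d + 1 - s) := by gcongr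
    _ = (coveringNumber r K : ℝ≥0∞) * (r : ℝ≥0∞) ^ d *
          ((M + 1) * (r : ℝ≥0∞) ^ (1 - (s : ℝ))) := by
        rw [add_sub_assoc, ENNReal.rpow_add _ _ (by simpa using hr0.ne') ENNReal.coe_ne_top]
        ring
    _ ≤ B * (2 * C + 1) := by gcongr; exact hK r ⟨hr0, hr1⟩

theorem Metric.packingNumber_two_mul_mul_le_measure_univ {X : Type*} [PseudoMetricSpace X]
    [MeasurableSpace X] [OpensMeasurableSpace X] (μ : Measure X) {A : Set X} {r : ℝ≥0}
    {m : ℝ≥0∞} (hm : ∀ x ∈ A, m ≤ μ (closedBall x r)) :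
    (packingNumber (2 * r) A : ℝ≥0∞) * m ≤ μ univ := by
  simp only [packingNumber, ENat.toENNReal_iSup, ENNReal.iSup_mul, iSup_le_iff]
  intro C hCA hC
  have hdisj : Pairwise fun x y : C => Disjoint (closedBall (x : X) r) (closedBall y r) := by
    intro x y hxy
    refine closedBall_disjoint_closedBall ?_
    have hsep : ((2 * r : ℝ≥0) : ℝ≥0∞) < edist (x : X) y :=
      hC x.2 y.2 (Subtype.coe_ne_coe.mpr hxy)
    rw [edist_dist, ← ENNReal.ofReal_coe_nnreal,
      ENNReal.ofReal_lt_ofReal_iff_of_nonneg (by positivity)] at hsep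
    push_cast at hsep
    linarith
  calc (C.encard : ℝ≥0∞) * m = ∑' _ : C, m := (ENNReal.tsum_set_const C m).symm
    _ ≤ ∑' x : C, μ (closedBall (x : X) r) := ENNReal.tsum_le_tsum fun x => hm x (hCA x.2)
    _ ≤ μ univ := tsum_measure_le_measure_univ
        (fun _ => measurableSet_closedBall.nullMeasurableSet) fun _ _ h => (hdisj h).aedisjoint

theorem IsDSet.exists_coveringNumber_mul_rpow_le {n : ℕ} {d : ℝ}
    {μ : Measure (EuclideanSpace ℝ (Fin n))} {K : Set (EuclideanSpace ℝ (Fin n))}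
    (hK : IsDSet d μ K) :
    ∃ B ≠ ⊤, ∀ r ∈ Ioc (0 : ℝ≥0) 1, (coveringNumber r K : ℝ≥0∞) * (r : ℝ≥0∞) ^ d ≤ B := by
  obtain ⟨-, -, -, -, hμ, c₁, c₂, hc₁, -, hball⟩ := hK
  have hc₁' : ENNReal.ofReal c₁ ≠ 0 := ENNReal.ofReal_ne_zero_iff.mpr hc₁
  refine ⟨2 ^ d * μ univ / ENNReal.ofReal c₁, ENNReal.div_ne_top (by finiteness) hc₁', ?_⟩
  rintro r ⟨hr0, hr1⟩
  set m := ENNReal.ofReal c₁ * ((r / 2 : ℝ≥0) : ℝ≥0∞) ^ d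
  have hhalf : ∀ x ∈ K, m ≤ μ (closedBall x (r / 2 : ℝ≥0)) := by
    intro x hx
    have hr2 : ((r / 2 : ℝ≥0) : ℝ) ≤ 1 := by
      have : (r : ℝ) ≤ 1 := hr1
      push_cast
      linarith [r.coe_nonneg]
    have := (hball (r / 2 : ℝ≥0) ⟨by positivity, hr2⟩ x hx).1
    rwa [ENNReal.ofReal_mul hc₁.le, ← ENNReal.ofReal_rpow_of_pos (by positivity),
      ENNReal.ofReal_coe_nnreal] at this
  have hpack := packingNumber_two_mul_mul_le_measure_univ μ hhalf
  rw [two_mul, add_halves] at hpack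
  have hr : (r : ℝ≥0∞) ^ d = 2 ^ d * ((r / 2 : ℝ≥0) : ℝ≥0∞) ^ d := by
    rw [← ENNReal.mul_rpow_of_ne_top ENNReal.ofNat_ne_top ENNReal.coe_ne_top, ← ENNReal.coe_ofNat,
      ← ENNReal.coe_mul, mul_div_cancel₀ _ two_ne_zero]
  rw [ENNReal.le_div_iff_mul_le (.inl hc₁') (.inl ENNReal.ofReal_ne_top)]
  calc (coveringNumber r K : ℝ≥0∞) * (r : ℝ≥0∞) ^ d * ENNReal.ofReal c₁
      = 2 ^ d * ((coveringNumber r K : ℝ≥0∞) * m) := by rw [hr]; ring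
    _ ≤ 2 ^ d * ((packingNumber r K : ℝ≥0∞) * m) := by
        gcongr; exact_mod_cast coveringNumber_le_packingNumber r K
    _ ≤ 2 ^ d * μ univ := by gcongr

def euclideanSnoc (n : ℕ) (p : EuclideanSpace ℝ (Fin n) × ℝ) : EuclideanSpace ℝ (Fin (n + 1)) :=
  (EuclideanSpace.equiv (Fin (n + 1)) ℝ).symm (Fin.snoc (EuclideanSpace.equiv (Fin n) ℝ p.1) p.2)

theorem dist_euclideanSnoc_sq {n : ℕ} (p q : EuclideanSpace ℝ (Fin n) × ℝ) :
    dist (euclideanSnoc n p) (euclideanSnoc n q) ^ 2 = dist p.1 q.1 ^ 2 + dist p.2 q.2 ^ 2 := by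
  rw [EuclideanSpace.dist_eq, EuclideanSpace.dist_eq, Real.sq_sqrt (by positivity),
    Real.sq_sqrt (by positivity), Fin.sum_univ_castSucc]
  simp [euclideanSnoc]

theorem lipschitzWith_euclideanSnoc (n : ℕ) : LipschitzWith 2 (euclideanSnoc n) := by
  refine LipschitzWith.of_dist_le_mul fun p q => ?_
  have h1 : dist p.1 q.1 ≤ dist p q := le_max_left _ _
  have h2 : dist p.2 q.2 ≤ dist p q := le_max_right _ _
  have := dist_euclideanSnoc_sq p q
  push_cast
  nlinarith [dist_nonneg (x := p.1) (y := q.1), dist_nonneg (x := p.2) (y := q.2)]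

theorem graphOn_eq_image_euclideanSnoc {n : ℕ} (K : Set (EuclideanSpace ℝ (Fin n)))
    (f : EuclideanSpace ℝ (Fin n) → ℝ) : graphOn K f = euclideanSnoc n '' K.graphOn f := by
  rw [Set.graphOn, image_image]
  rfl

theorem dimH_graph_le_of_holder_general {n : ℕ} (s : ℝ) (hs0 : 0 < s) (hs1 : s ≤ 1)
    (d : ℝ) (hd0 : 0 < d)
    (μ : Measure (EuclideanSpace ℝ (Fin n))) (K : Set (EuclideanSpace ℝ (Fin n)))
    (hK : IsDSet d μ K) (f : EuclideanSpace ℝ (Fin n) → ℝ)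
    (hf : ∃ c : ℝ, 0 < c ∧ ∀ x ∈ K, ∀ y ∈ K, |f x - f y| ≤ c * dist x y ^ s) :
    dimH (graphOn K f) ≤ ENNReal.ofReal (min (d + 1 - s) (d / s)) := by
  obtain ⟨c, -, hc⟩ := hf
  obtain ⟨B, hB, hcov⟩ := hK.exists_coveringNumber_mul_rpow_le
  have hs : ((s.toNNReal : ℝ≥0) : ℝ) = s := Real.coe_toNNReal s hs0.le
  have hs1' : s.toNNReal ≤ 1 := Real.toNNReal_le_one.mpr hs1
  have hHolder : HolderOnWith c.toNNReal s.toNNReal f K := .of_dist_le fun x hx y hy => by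
    rw [hs, Real.dist_eq]
    exact (hc x hx y hy).trans (by gcongr; exact Real.le_coe_toNNReal c)
  rw [graphOn_eq_image_euclideanSnoc, ENNReal.ofReal_min]
  refine ((lipschitzWith_euclideanSnoc n).dimH_image_le _).trans (le_min ?_ ?_)
  · simpa only [hs] using hHolder.dimH_graphOn_le_add_one_sub hd0.le hs1' hB hcov
  · calc dimH (K.graphOn f)
        ≤ dimH K / s.toNNReal :=
          hHolder.dimH_graphOn_le_div hK.1.isBounded (Real.toNNReal_pos.mpr hs0) hs1'
      _ ≤ ENNReal.ofReal d / ENNReal.ofReal s :=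
          ENNReal.div_le_div_right (dimH_le_of_coveringNumber_mul_rpow_le hd0.le hB hcov) _
      _ = ENNReal.ofReal (d / s) := (ENNReal.ofReal_div_of_pos hs0).symm

/-- If `0 < s ≤ 1`, `K` is a `d`-set in `ℝⁿ` with `0 < d ≤ n` and `f` is Hölder continuous of
exponent `s` on `K`, then `dim_H Γ(f) ≤ min {d + 1 - s, d/s}`. -/
theorem dimH_graph_le_of_holder {n : ℕ} (s : ℝ) (hs0 : 0 < s) (hs1 : s ≤ 1)
    (d : ℝ) (hd0 : 0 < d) (hdn : d ≤ n)
    (μ : Measure (EuclideanSpace ℝ (Fin n))) (K : Set (EuclideanSpace ℝ (Fin n)))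
    (hK : IsDSet d μ K) (f : EuclideanSpace ℝ (Fin n) → ℝ)
    (hf : ∃ c : ℝ, 0 < c ∧ ∀ x ∈ K, ∀ y ∈ K, |f x - f y| ≤ c * dist x y ^ s) :
    dimH (graphOn K f) ≤ ENNReal.ofReal (min (d + 1 - s) (d / s)) :=
  dimH_graph_le_of_holder_general s hs0 hs1 d hd0 μ K hK f hf

end
end

section
/- Let 0 < s ≤ 1 and let K be a d-set in ℝⁿ with 0 < d ≤ n. If f : K → ℝ is Hölder continuous of exponent s, then the upper box counting dimension of the graph Γ(f) ⊆ ℝ^{n+1} satisfies ͞dim_B Γ(f) ≤ d + 1 − s. -/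
open MeasureTheory Metric Set

noncomputable section

/-- The dyadic `N`-cube of side length `2^{-j}` centered at `2^{-j} m`, `m ∈ ℤᴺ`. -/
def dyadicCube (N j : ℕ) (m : Fin N → ℤ) : Set (EuclideanSpace ℝ (Fin N)) :=
  {x | ∀ i, |x i - (2 : ℝ) ^ (-(j : ℤ)) * (m i : ℝ)| ≤ (2 : ℝ) ^ (-(j : ℤ)) / 2}

/-- The number of dyadic cubes of side length `2^{-j}` (centered at the points `2^{-j}m`,
`m ∈ ℤᴺ`) which intersect `E`. -/
noncomputable def boxCount {N : ℕ} (E : Set (EuclideanSpace ℝ (Fin N))) (j : ℕ) : ℕ :=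
  Set.ncard {m : Fin N → ℤ | (dyadicCube N j m ∩ E).Nonempty}

/-- The upper box counting dimension `limsup_j log₂(N_j(E))/j` of a set `E`. -/
noncomputable def upperBoxDim {N : ℕ} (E : Set (EuclideanSpace ℝ (Fin N))) : ℝ :=
  Filter.limsup (fun j : ℕ => Real.logb 2 (boxCount E j) / j) Filter.atTop

/-! Cover by the dyadic cubes of side `w = 2⁻ʲ`. Points of `K` in cubes whose indices agree mod 4
are more than `2w` apart, so the lower mass bound `μ (B_w(x)) ≥ c₁ wᵈ` shows that `K` meets
`O(w⁻ᵈ)` cubes. Over a cube meeting `K` the Hölder function oscillates by `O(wˢ)`, so the graph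
meets `O(wˢ⁻¹)` cubes of the column above it, and `N_j(Γ(f)) = O(2^{j(d+1-s)})`. -/

open scoped ENNReal Finset

lemma abs_apply_sub_le_dist {ι : Type*} [Fintype ι] (x y : EuclideanSpace ℝ ι) (i : ι) :
    |x i - y i| ≤ dist x y := by
  simpa [Real.dist_eq] using PiLp.dist_apply_le x y i

lemma dist_le_sqrt_card_mul_of_forall_abs_sub_le {ι : Type*} [Fintype ι]
    {x y : EuclideanSpace ℝ ι} {a : ℝ} (ha : 0 ≤ a) (h : ∀ i, |x i - y i| ≤ a) :
    dist x y ≤ √(Fintype.card ι) * a := by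
  rw [EuclideanSpace.dist_eq, ← Real.sqrt_sq ha, ← Real.sqrt_mul (Nat.cast_nonneg _)]
  gcongr
  calc ∑ i, dist (x i) (y i) ^ 2 ≤ ∑ _i : ι, a ^ 2 := by
        gcongr with i
        rw [Real.dist_eq]
        exact h i
    _ = _ := by simp

lemma mul_abs_intCast_sub_le {w a b : ℝ} {k l : ℤ} (ha : |a - w * k| ≤ w / 2)
    (hb : |b - w * l| ≤ w / 2) : w * |(k : ℝ) - l| ≤ |a - b| + w := by
  have hw : 0 ≤ w := by linarith [abs_nonneg (a - w * k)]
  rw [← abs_of_nonneg hw, ← abs_mul, abs_of_nonneg hw, mul_sub]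
  rw [abs_sub_comm] at ha
  linarith [abs_sub_le (w * k) a (w * l), abs_sub_le a b (w * l)]

lemma dist_le_of_mem_dyadicCube {N j : ℕ} {m : Fin N → ℤ} {x y : EuclideanSpace ℝ (Fin N)}
    (hx : x ∈ dyadicCube N j m) (hy : y ∈ dyadicCube N j m) :
    dist x y ≤ √N * 2 ^ (-(j : ℤ)) := by
  refine (dist_le_sqrt_card_mul_of_forall_abs_sub_le (a := 2 ^ (-(j : ℤ))) (by positivity)
    fun i => ?_).trans_eq (by simp)
  have hy' := hy i
  rw [abs_sub_comm] at hy'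
  linarith [abs_sub_le (x i) (2 ^ (-(j : ℤ)) * m i) (y i), hx i]

lemma disjoint_closedBall_of_mem_dyadicCube {N j : ℕ} {m m' : Fin N → ℤ}
    {x y : EuclideanSpace ℝ (Fin N)} (hx : x ∈ dyadicCube N j m) (hy : y ∈ dyadicCube N j m')
    (hne : m ≠ m') (hmod : ∀ i, (m i : ZMod 4) = m' i) :
    Disjoint (closedBall x (2 ^ (-(j : ℤ)))) (closedBall y (2 ^ (-(j : ℤ)))) := by
  obtain ⟨i, hi⟩ := Function.ne_iff.mp hne
  have h4 : (4 : ℝ) ≤ |(m i : ℝ) - m' i| := by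
    have hdvd : (4 : ℤ) ∣ m i - m' i := by
      simpa using (ZMod.intCast_eq_intCast_iff_dvd_sub _ _ 4).mp (hmod i).symm
    exact_mod_cast Int.le_of_dvd (abs_pos.mpr (sub_ne_zero.mpr hi)) ((dvd_abs _ _).mpr hdvd)
  have hsep := mul_abs_intCast_sub_le (hx i) (hy i)
  have hw : (0 : ℝ) < 2 ^ (-(j : ℤ)) := by positivity
  apply closedBall_disjoint_closedBall
  nlinarith [abs_apply_sub_le_dist x y i]

lemma finite_setOf_dyadicCube_inter_nonempty {N : ℕ} (j : ℕ) {E : Set (EuclideanSpace ℝ (Fin N))}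
    (hE : Bornology.IsBounded E) : {m : Fin N → ℤ | (dyadicCube N j m ∩ E).Nonempty}.Finite := by
  obtain ⟨R, hR⟩ := hE.subset_closedBall 0
  set w : ℝ := 2 ^ (-(j : ℤ))
  have hw : 0 < w := by positivity
  set B : ℤ := ⌈(R + w) / w⌉
  refine (Set.Finite.pi' fun _ => Set.finite_Icc (-B) B).subset ?_
  rintro m ⟨p, hpQ, hpE⟩ i
  have hp : |p i - 0| ≤ R :=
    (abs_apply_sub_le_dist p 0 i).trans (mem_closedBall.mp (hR hpE))
  have hsep := mul_abs_intCast_sub_le (hpQ i) (b := 0) (l := 0)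
    (by simp only [Int.cast_zero, mul_zero, sub_zero, abs_zero]; positivity)
  have hm : |(m i : ℝ)| ≤ B := by
    refine ((le_div_iff₀' hw).mpr ?_).trans (Int.le_ceil _)
    simpa only [Int.cast_zero, sub_zero] using hsep.trans (add_le_add_left hp w)
  rw [Set.mem_Icc, ← abs_le]
  exact_mod_cast hm

lemma boxCount_mul_le_of_le_measure_closedBall {N j : ℕ}
    {μ : Measure (EuclideanSpace ℝ (Fin N))} {E : Set (EuclideanSpace ℝ (Fin N))} {a : ℝ≥0∞}
    (h : ∀ x ∈ E, a ≤ μ (closedBall x (2 ^ (-(j : ℤ))))) :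
    (boxCount E j : ℝ≥0∞) * a ≤ 4 ^ N * μ univ := by
  classical
  set S := {m : Fin N → ℤ | (dyadicCube N j m ∩ E).Nonempty}
  rcases S.infinite_or_finite with hS | hS
  · simp [boxCount, S, hS.ncard]
  choose! x hxQ hxE using fun m (hm : m ∈ S) => hm
  set residue : (Fin N → ℤ) → Fin N → ZMod 4 := fun m i => m i
  have hclass : ∀ v, (#{m ∈ hS.toFinset | residue m = v} : ℝ≥0∞) * a ≤ μ univ := by
    intro v
    set F := {m ∈ hS.toFinset | residue m = v}
    have hF : ∀ m ∈ F, m ∈ S := fun m hm => hS.mem_toFinset.mp (Finset.mem_filter.mp hm).1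
    have hdisj : (F : Set (Fin N → ℤ)).PairwiseDisjoint
        fun m => closedBall (x m) (2 ^ (-(j : ℤ))) := by
      intro m hm m' hm' hne
      refine disjoint_closedBall_of_mem_dyadicCube (hxQ m (hF m hm)) (hxQ m' (hF m' hm')) hne
        fun i => ?_
      rw [Finset.mem_coe, Finset.mem_filter] at hm hm'
      exact congrFun (hm.2.trans hm'.2.symm) i
    calc (#F : ℝ≥0∞) * a = ∑ m ∈ F, a := by simp
      _ ≤ ∑ m ∈ F, μ (closedBall (x m) (2 ^ (-(j : ℤ)))) :=
        Finset.sum_le_sum fun m hm => h _ (hxE m (hF m hm))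
      _ = μ (⋃ m ∈ F, closedBall (x m) (2 ^ (-(j : ℤ)))) :=
        (measure_biUnion_finset hdisj fun _ _ => measurableSet_closedBall).symm
      _ ≤ μ univ := measure_mono (subset_univ _)
  calc (boxCount E j : ℝ≥0∞) * a = ∑ v, (#{m ∈ hS.toFinset | residue m = v} : ℝ≥0∞) * a := by
        rw [boxCount, Set.ncard_eq_toFinset_card S hS,
          Finset.card_eq_sum_card_fiberwise fun m _ => Finset.mem_univ (residue m),
          Nat.cast_sum, Finset.sum_mul]
    _ ≤ ∑ _v : Fin N → ZMod 4, μ univ := Finset.sum_le_sum fun v _ => hclass v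
    _ = 4 ^ N * μ univ := by simp

lemma snoc_mem_dyadicCube_iff {n j : ℕ} {m : Fin (n + 1) → ℤ} {x : EuclideanSpace ℝ (Fin n)}
    {t : ℝ} :
    (EuclideanSpace.equiv (Fin (n + 1)) ℝ).symm (Fin.snoc (EuclideanSpace.equiv (Fin n) ℝ x) t)
        ∈ dyadicCube (n + 1) j m ↔
      x ∈ dyadicCube n j (Fin.init m) ∧
        |t - 2 ^ (-(j : ℤ)) * m (Fin.last n)| ≤ 2 ^ (-(j : ℤ)) / 2 := by
  simp [dyadicCube, Fin.forall_fin_succ', Fin.init]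

lemma Finset.card_le_floor_add_one_of_abs_sub_le {s : Finset ℤ} {D : ℝ}
    (h : ∀ a ∈ s, ∀ b ∈ s, |(a : ℝ) - b| ≤ D) : #s ≤ ⌊D⌋₊ + 1 := by
  rcases s.eq_empty_or_nonempty with rfl | hs
  · simp
  set a₀ := s.min' hs
  calc #s ≤ #(Finset.Icc a₀ (a₀ + ⌊D⌋₊)) := Finset.card_le_card fun b hb => ?_
    _ = ⌊D⌋₊ + 1 := by rw [Int.card_Icc]; omega
  obtain ⟨k, hk⟩ := Int.eq_ofNat_of_zero_le (sub_nonneg.mpr (s.min'_le b hb))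
  have hkD : k ≤ ⌊D⌋₊ := by
    refine Nat.le_floor ?_
    have hbD := (le_abs_self _).trans (h b hb a₀ (s.min'_mem hs))
    rw [← Int.cast_sub, hk] at hbD
    exact_mod_cast hbD
  rw [Finset.mem_Icc]
  omega

lemma boxCount_graphOn_le {n j : ℕ} {K : Set (EuclideanSpace ℝ (Fin n))}
    (hK : Bornology.IsBounded K) {f : EuclideanSpace ℝ (Fin n) → ℝ} {ω : ℝ}
    (hω : ∀ m, ∀ x ∈ dyadicCube n j m ∩ K, ∀ y ∈ dyadicCube n j m ∩ K, |f x - f y| ≤ ω) :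
    boxCount (graphOn K f) j ≤ (⌊ω / 2 ^ (-(j : ℤ)) + 1⌋₊ + 1) * boxCount K j := by
  classical
  set w : ℝ := 2 ^ (-(j : ℤ))
  have hw : 0 < w := by positivity
  set T := {m : Fin (n + 1) → ℤ | (dyadicCube (n + 1) j m ∩ graphOn K f).Nonempty}
  rcases T.infinite_or_finite with hT | hT
  · simp [boxCount, T, hT.ncard]
  have hT_mem : ∀ m ∈ hT.toFinset, ∃ x ∈ dyadicCube n j (Fin.init m) ∩ K,
      |f x - w * m (Fin.last n)| ≤ w / 2 := by
    rintro m hm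
    obtain ⟨_, hpQ, x, hxK, rfl⟩ := hT.mem_toFinset.mp hm
    obtain ⟨hxQ, hfx⟩ := snoc_mem_dyadicCube_iff.mp hpQ
    exact ⟨x, ⟨hxQ, hxK⟩, hfx⟩
  have hcolumn : ∀ m₀, #{m ∈ hT.toFinset | Fin.init m = m₀} ≤ ⌊ω / w + 1⌋₊ + 1 := by
    intro m₀
    rw [← Finset.card_image_of_injOn (f := fun m => m (Fin.last n)) ?inj]
    case inj =>
      intro m hm m' hm' hlast
      rw [Finset.mem_coe, Finset.mem_filter] at hm hm'
      rw [← Fin.snoc_init_self m, ← Fin.snoc_init_self m', hm.2, hm'.2]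
      exact congrArg _ hlast
    refine Finset.card_le_floor_add_one_of_abs_sub_le ?_
    simp only [Finset.mem_image, Finset.mem_filter]
    rintro _ ⟨m, ⟨hm, rfl⟩, rfl⟩ _ ⟨m', ⟨hm', hinit⟩, rfl⟩
    obtain ⟨x, hx, hfx⟩ := hT_mem m hm
    obtain ⟨x', hx', hfx'⟩ := hT_mem m' hm'
    rw [hinit] at hx'
    rw [div_add_one hw.ne', le_div_iff₀' hw]
    linarith [mul_abs_intCast_sub_le hfx hfx', hω _ x hx x' hx']
  calc boxCount (graphOn K f) j = #hT.toFinset := Set.ncard_eq_toFinset_card T hT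
    _ ≤ (⌊ω / w + 1⌋₊ + 1) * #(hT.toFinset.image Fin.init) :=
        Finset.card_le_mul_card_image _ _ fun m₀ _ => hcolumn m₀
    _ ≤ (⌊ω / w + 1⌋₊ + 1) * boxCount K j := by
        gcongr
        rw [← Set.ncard_coe_finset]
        refine Set.ncard_le_ncard ?_ (finite_setOf_dyadicCube_inter_nonempty j hK)
        intro m₀ hm₀
        obtain ⟨m, hm, rfl⟩ := Finset.mem_image.mp hm₀
        obtain ⟨x, hx, -⟩ := hT_mem m hm
        exact ⟨x, hx⟩

lemma two_zpow_neg_rpow (j : ℕ) (x : ℝ) :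
    ((2 : ℝ) ^ (-(j : ℤ))) ^ x = (2 ^ ((j : ℝ) * x))⁻¹ := by
  rw [zpow_neg, zpow_natCast, Real.inv_rpow (by positivity), ← Real.rpow_natCast,
    ← Real.rpow_mul zero_le_two]

lemma boxCount_graphOn_le_of_holder {n : ℕ} (j : ℕ) {K : Set (EuclideanSpace ℝ (Fin n))}
    (hK : Bornology.IsBounded K) {f : EuclideanSpace ℝ (Fin n) → ℝ} {c s : ℝ} (hc : 0 ≤ c)
    (hs : 0 ≤ s) (hf : ∀ x ∈ K, ∀ y ∈ K, |f x - f y| ≤ c * dist x y ^ s) :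
    (boxCount (graphOn K f) j : ℝ) ≤ (c * √n ^ s * 2 ^ ((j : ℝ) * (1 - s)) + 2) * boxCount K j := by
  set w : ℝ := 2 ^ (-(j : ℤ))
  have hw : 0 < w := by positivity
  have hω : ∀ m, ∀ x ∈ dyadicCube n j m ∩ K, ∀ y ∈ dyadicCube n j m ∩ K,
      |f x - f y| ≤ c * (√n * w) ^ s := fun m x hx y hy =>
    (hf x hx.2 y hy.2).trans (by gcongr; exact dist_le_of_mem_dyadicCube hx.1 hy.1)
  have hscale : c * (√n * w) ^ s / w = c * √n ^ s * 2 ^ ((j : ℝ) * (1 - s)) := by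
    rw [Real.mul_rpow (Real.sqrt_nonneg _) hw.le, mul_div_assoc, mul_div_assoc,
      ← Real.rpow_sub_one hw.ne', two_zpow_neg_rpow, ← Real.rpow_neg zero_le_two]
    ring_nf
  have hcount : ((⌊c * (√n * w) ^ s / w + 1⌋₊ + 1 : ℕ) : ℝ) ≤
      c * √n ^ s * 2 ^ ((j : ℝ) * (1 - s)) + 2 := by
    rw [← hscale]
    push_cast
    linarith [Nat.floor_le (show 0 ≤ c * (√n * w) ^ s / w + 1 by positivity)]
  calc (boxCount (graphOn K f) j : ℝ)
      ≤ ((⌊c * (√n * w) ^ s / w + 1⌋₊ + 1 : ℕ) : ℝ) * boxCount K j := by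
        exact_mod_cast boxCount_graphOn_le hK hω
    _ ≤ _ := by gcongr

lemma IsDSet.exists_boxCount_le {n : ℕ} {d : ℝ} {μ : Measure (EuclideanSpace ℝ (Fin n))}
    {K : Set (EuclideanSpace ℝ (Fin n))} (hK : IsDSet d μ K) :
    ∃ C, ∀ j : ℕ, (boxCount K j : ℝ) ≤ C * 2 ^ ((j : ℝ) * d) := by
  obtain ⟨-, -, -, -, hμ, c₁, _, hc₁, -, hball⟩ := hK
  refine ⟨4 ^ n * (μ univ).toReal / c₁, fun j => ?_⟩
  set w : ℝ := 2 ^ (-(j : ℤ))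
  have hw : w ∈ Ioc 0 1 := ⟨by positivity, zpow_le_one_of_nonpos₀ one_le_two (by simp)⟩
  have hpack : (boxCount K j : ℝ) * (c₁ * w ^ d) ≤ 4 ^ n * (μ univ).toReal := by
    have := ENNReal.toReal_mono (by finiteness)
      (boxCount_mul_le_of_le_measure_closedBall fun x hx => (hball w hw x hx).1)
    simpa [ENNReal.toReal_ofReal (by positivity : 0 ≤ c₁ * w ^ d)] using this
  rw [two_zpow_neg_rpow] at hpack
  rw [div_mul_eq_mul_div, le_div_iff₀ hc₁]
  calc (boxCount K j : ℝ) * c₁ = (boxCount K j : ℝ) * (c₁ * (2 ^ ((j : ℝ) * d))⁻¹)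
        * 2 ^ ((j : ℝ) * d) := by field_simp
    _ ≤ _ := by gcongr

lemma upperBoxDim_le_of_boxCount_le {N : ℕ} {E : Set (EuclideanSpace ℝ (Fin N))} {C t : ℝ}
    (ht : 0 ≤ t) (h : ∀ j : ℕ, (boxCount E j : ℝ) ≤ C * 2 ^ ((j : ℝ) * t)) :
    upperBoxDim E ≤ t := by
  set A := max C 1
  have hlog : ∀ j : ℕ, Real.logb 2 (boxCount E j) ≤ Real.logb 2 A + j * t := by
    intro j
    rcases (boxCount E j).eq_zero_or_pos with h0 | hpos
    · rw [h0, Nat.cast_zero, Real.logb_zero]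
      have := Real.logb_nonneg one_lt_two (le_max_right C 1)
      positivity
    calc Real.logb 2 (boxCount E j) ≤ Real.logb 2 (A * 2 ^ ((j : ℝ) * t)) := by
          refine Real.logb_le_logb_of_le one_lt_two (by exact_mod_cast hpos) ((h j).trans ?_)
          gcongr
          exact le_max_left C 1
      _ = Real.logb 2 A + j * t := by
          rw [Real.logb_mul (by positivity) (by positivity), Real.logb_rpow two_pos one_lt_two.ne']
  have hlim : Filter.Tendsto (fun j : ℕ => Real.logb 2 A / j + t) Filter.atTop (nhds t) := by
    simpa using (tendsto_const_div_atTop_nhds_zero_nat (Real.logb 2 A)).add_const t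
  refine (Filter.limsup_le_limsup ?_ ?_ hlim.isBoundedUnder_le).trans_eq hlim.limsup_eq
  · filter_upwards [Filter.eventually_gt_atTop 0] with j hj
    rw [div_add' _ _ _ (by positivity), mul_comm t]
    gcongr
    exact hlog j
  · refine Filter.isCoboundedUnder_le_of_le Filter.atTop (x := 0) fun j => ?_
    exact div_nonneg (div_nonneg (Real.log_natCast_nonneg _) (Real.log_nonneg one_le_two))
      j.cast_nonneg

theorem upperBoxDim_graph_le_of_holder_general {n : ℕ} (s : ℝ) (hs0 : 0 < s) (hs1 : s ≤ 1)
    (d : ℝ) (hd0 : 0 < d)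
    (μ : Measure (EuclideanSpace ℝ (Fin n))) (K : Set (EuclideanSpace ℝ (Fin n)))
    (hK : IsDSet d μ K) (f : EuclideanSpace ℝ (Fin n) → ℝ)
    (hf : ∃ c : ℝ, 0 < c ∧ ∀ x ∈ K, ∀ y ∈ K, |f x - f y| ≤ c * dist x y ^ s) :
    upperBoxDim (graphOn K f) ≤ d + 1 - s := by
  obtain ⟨c, hc, hf⟩ := hf
  obtain ⟨C, hC⟩ := hK.exists_boxCount_le
  refine upperBoxDim_le_of_boxCount_le (C := (c * √n ^ s + 2) * C) (by linarith) fun j => ?_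
  have hgrowth : (1 : ℝ) ≤ 2 ^ ((j : ℝ) * (1 - s)) :=
    Real.one_le_rpow one_le_two (mul_nonneg j.cast_nonneg (by linarith))
  calc (boxCount (graphOn K f) j : ℝ)
      ≤ (c * √n ^ s * 2 ^ ((j : ℝ) * (1 - s)) + 2) * boxCount K j :=
        boxCount_graphOn_le_of_holder j hK.1.isBounded hc.le hs0.le hf
    _ ≤ ((c * √n ^ s + 2) * 2 ^ ((j : ℝ) * (1 - s))) * (C * 2 ^ ((j : ℝ) * d)) := by
        gcongr
        · nlinarith [show 0 ≤ c * √n ^ s by positivity]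
        · exact hC j
    _ = (c * √n ^ s + 2) * C * 2 ^ ((j : ℝ) * (d + 1 - s)) := by
        rw [mul_mul_mul_comm, ← Real.rpow_add two_pos]
        ring_nf

/-- If `0 < s ≤ 1`, `K` is a `d`-set in `ℝⁿ` with `0 < d ≤ n`, and `f` is Hölder continuous of
exponent `s` on `K`, then the upper box counting dimension of `Γ(f)` is at most `d + 1 - s`. -/
theorem upperBoxDim_graph_le_of_holder {n : ℕ} (s : ℝ) (hs0 : 0 < s) (hs1 : s ≤ 1)
    (d : ℝ) (hd0 : 0 < d) (hdn : d ≤ n)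
    (μ : Measure (EuclideanSpace ℝ (Fin n))) (K : Set (EuclideanSpace ℝ (Fin n)))
    (hK : IsDSet d μ K) (f : EuclideanSpace ℝ (Fin n) → ℝ)
    (hf : ∃ c : ℝ, 0 < c ∧ ∀ x ∈ K, ∀ y ∈ K, |f x - f y| ≤ c * dist x y ^ s) :
    upperBoxDim (graphOn K f) ≤ d + 1 - s :=
  upperBoxDim_graph_le_of_holder_general s hs0 hs1 d hd0 μ K hK f hf

end
end
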